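/- arXiv:math/0504039 — 3 statements merged into one kernel-verified Lean document; each statement's English description precedes it below -/
import Mathlib

section
/- The number of ways to place one b×w block on top of another b×w block (with b ≠ w), where blocks are axis-aligned boxes in ℝ³ of height 1 that may be rotated by 90° in the xy-plane and must overlap in at least one unit stud position, is (2b−1)(2w−1) + (b+w−1)². -/
lemma exists_stud_iff (n B dx : ℤ) (hn : 0 < n) (hB : 0 < B) :
    (∃ i : ℤ, 0 ≤ i ∧ i < n ∧ dx ≤ i ∧ i < dx + B) ↔ (1 - B ≤ dx ∧ dx ≤ n - 1) := by
  constructor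
  · rintro ⟨i, h1, h2, h3, h4⟩; omega
  · rintro ⟨h1, h2⟩
    rcases le_or_gt 0 dx with h | h
    · exact ⟨dx, by omega, by omega, by omega, by omega⟩
    · exact ⟨0, by omega, by omega, by omega, by omega⟩

set_option maxHeartbeats 1000000 in
/-- The number of ways to place one `b × w` block (with `b ≠ w`) on top of another:
a placement is an orientation (`false` = parallel, `true` = rotated 90°) together with
an integer offset `(dx, dy)`, such that the upper block's footprint covers at least one
stud position `(i, j)` of the lower block. -/
theorem stmt0 (b w : ℕ) (hb : 0 < b) (hw : 0 < w) (hbw : b ≠ w) :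
    Nat.card {p : Bool × ℤ × ℤ //
      ∃ i j : ℤ, 0 ≤ i ∧ i < b ∧ 0 ≤ j ∧ j < w ∧
        p.2.1 ≤ i ∧ i < p.2.1 + (if p.1 then (w : ℤ) else b) ∧
        p.2.2 ≤ j ∧ j < p.2.2 + (if p.1 then (b : ℤ) else w)} =
    (2 * b - 1) * (2 * w - 1) + (b + w - 1) ^ 2 := by
  set F : Finset (Bool × ℤ × ℤ) :=
    ({false} : Finset Bool) ×ˢ (Finset.Icc (1-(b:ℤ)) ((b:ℤ)-1) ×ˢ Finset.Icc (1-(w:ℤ)) ((w:ℤ)-1)) ∪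
    ({true} : Finset Bool) ×ˢ (Finset.Icc (1-(w:ℤ)) ((b:ℤ)-1) ×ˢ Finset.Icc (1-(b:ℤ)) ((w:ℤ)-1))
    with hF
  have hbz : (0:ℤ) < b := by exact_mod_cast hb
  have hwz : (0:ℤ) < w := by exact_mod_cast hw
  have hset : {p : Bool × ℤ × ℤ |
      ∃ i j : ℤ, 0 ≤ i ∧ i < b ∧ 0 ≤ j ∧ j < w ∧
        p.2.1 ≤ i ∧ i < p.2.1 + (if p.1 then (w : ℤ) else b) ∧
        p.2.2 ≤ j ∧ j < p.2.2 + (if p.1 then (b : ℤ) else w)} = ↑F := by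
    ext ⟨o, dx, dy⟩
    have hsplit : (∃ i j : ℤ, 0 ≤ i ∧ i < b ∧ 0 ≤ j ∧ j < w ∧
        dx ≤ i ∧ i < dx + (if o then (w : ℤ) else b) ∧
        dy ≤ j ∧ j < dy + (if o then (b : ℤ) else w)) ↔
        (∃ i : ℤ, 0 ≤ i ∧ i < b ∧ dx ≤ i ∧ i < dx + (if o then (w : ℤ) else b)) ∧
        (∃ j : ℤ, 0 ≤ j ∧ j < w ∧ dy ≤ j ∧ j < dy + (if o then (b : ℤ) else w)) := by
      constructor
      · rintro ⟨i, j, h1, h2, h3, h4, h5, h6, h7, h8⟩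
        exact ⟨⟨i, h1, h2, h5, h6⟩, ⟨j, h3, h4, h7, h8⟩⟩
      · rintro ⟨⟨i, h1, h2, h5, h6⟩, ⟨j, h3, h4, h7, h8⟩⟩
        exact ⟨i, j, h1, h2, h3, h4, h5, h6, h7, h8⟩
    simp only [Set.mem_setOf_eq, hsplit, hF, Finset.coe_union, Set.mem_union,
      Finset.coe_product, Set.mem_prod, Finset.coe_singleton, Set.mem_singleton_iff,
      Finset.coe_Icc, Set.mem_Icc]
    cases o with
    | false =>
        simp only [Bool.false_eq_true, if_false]
        rw [exists_stud_iff _ _ _ hbz hbz, exists_stud_iff _ _ _ hwz hwz]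
        tauto
    | true =>
        simp only [if_true]
        rw [exists_stud_iff _ _ _ hbz hwz, exists_stud_iff _ _ _ hwz hbz]
        tauto
  have hcard : Nat.card {p : Bool × ℤ × ℤ //
      ∃ i j : ℤ, 0 ≤ i ∧ i < b ∧ 0 ≤ j ∧ j < w ∧
        p.2.1 ≤ i ∧ i < p.2.1 + (if p.1 then (w : ℤ) else b) ∧
        p.2.2 ≤ j ∧ j < p.2.2 + (if p.1 then (b : ℤ) else w)} = F.card := by
    calc Nat.card {p : Bool × ℤ × ℤ //
      ∃ i j : ℤ, 0 ≤ i ∧ i < b ∧ 0 ≤ j ∧ j < w ∧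
        p.2.1 ≤ i ∧ i < p.2.1 + (if p.1 then (w : ℤ) else b) ∧
        p.2.2 ≤ j ∧ j < p.2.2 + (if p.1 then (b : ℤ) else w)}
        = ({p : Bool × ℤ × ℤ |
      ∃ i j : ℤ, 0 ≤ i ∧ i < b ∧ 0 ≤ j ∧ j < w ∧
        p.2.1 ≤ i ∧ i < p.2.1 + (if p.1 then (w : ℤ) else b) ∧
        p.2.2 ≤ j ∧ j < p.2.2 + (if p.1 then (b : ℤ) else w)} : Set (Bool × ℤ × ℤ)).ncard :=
          (Nat.card_coe_set_eq _).symm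
      _ = (↑F : Set (Bool × ℤ × ℤ)).ncard := by rw [hset]
      _ = F.card := Set.ncard_coe_finset F
  rw [hcard]
  have hdisj : Disjoint
      (({false} : Finset Bool) ×ˢ (Finset.Icc (1-(b:ℤ)) ((b:ℤ)-1) ×ˢ Finset.Icc (1-(w:ℤ)) ((w:ℤ)-1)))
      (({true} : Finset Bool) ×ˢ (Finset.Icc (1-(w:ℤ)) ((b:ℤ)-1) ×ˢ Finset.Icc (1-(b:ℤ)) ((w:ℤ)-1))) := by
    rw [Finset.disjoint_left]
    rintro ⟨o, x, y⟩ h1 h2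
    have e1 := (Finset.mem_product.1 h1).1
    have e2 := (Finset.mem_product.1 h2).1
    simp only [Finset.mem_singleton] at e1 e2
    rw [e1] at e2; exact Bool.false_ne_true e2
  rw [hF, Finset.card_union_of_disjoint hdisj]
  simp only [Finset.card_product, Finset.card_singleton, one_mul, Int.card_Icc]
  have h1 : ((b:ℤ) - 1 + 1 - (1 - b)).toNat = 2 * b - 1 := by omega
  have h2 : ((w:ℤ) - 1 + 1 - (1 - w)).toNat = 2 * w - 1 := by omega
  have h3 : ((b:ℤ) - 1 + 1 - (1 - w)).toNat = b + w - 1 := by omega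
  have h4 : ((w:ℤ) - 1 + 1 - (1 - b)).toNat = b + w - 1 := by omega
  rw [h1, h2, h3, h4, sq]
end

section
/- Let c_n ≥ 0 with c_1 ≥ 1, define b_n = Σ_{k≥0} Σ_{m_1+⋯+m_{k+1}=n} c_{m_1}⋯c_{m_{k+1}}, and suppose h = lim (b_n)^(1/n) exists in (0, ∞). Then Σ_{n=1}^N c_n h^(−n) ≤ 1 for every N. -/
/-!
Put `x = h⁻¹` and `S = ∑_{n=1}^N c n xⁿ`. Expanding `S^k` gives a sum over `k`-tuples of parts in
`[1, N]`, and each tuple is a composition of its sum `M ∈ [k, kN]`; hence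
`S^k ≤ ∑_{M=k}^{kN} b M x^M`. Since `(b M)^(1/M) → h`, for every `u > 1` eventually `b M x^M ≤ u^M`,
so `S^k ≤ (kN + 1) u^(kN)` for large `k`. A linear factor cannot beat geometric growth, so
`S ≤ u^N`, and letting `u → 1` gives `S ≤ 1`.
-/

open Filter Topology Finset

theorem sum_prod_ofFn_le_sum_composition {R : Type*} [CommSemiring R] [PartialOrder R]
    [IsOrderedRing R] {c : ℕ → R} (hc : ∀ n, 0 ≤ c n) {k M : ℕ} (s : Finset (Fin k → ℕ))
    (hs : ∀ p ∈ s, (∀ i, 0 < p i) ∧ ∑ i, p i = M) :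
    ∑ p ∈ s, ((List.ofFn p).map c).prod ≤ ∑ σ : Composition M, (σ.blocks.map c).prod := by
  classical
  have hsub : s.image List.ofFn ⊆ (univ : Finset (Composition M)).image Composition.blocks := by
    intro l hl
    obtain ⟨p, hp, rfl⟩ := mem_image.1 hl
    have hpos : ∀ n ∈ List.ofFn p, 0 < n := by simpa [List.mem_ofFn] using (hs p hp).1
    exact mem_image.2 ⟨⟨List.ofFn p, hpos _, by simpa [List.sum_ofFn] using (hs p hp).2⟩,
      mem_univ _, rfl⟩
  rw [← sum_image (f := fun l => (l.map c).prod) List.ofFn_injective.injOn,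
    ← sum_image (f := fun l => (l.map c).prod) fun σ _ τ _ => Composition.ext]
  refine sum_le_sum_of_subset_of_nonneg hsub fun l _ _ => List.prod_nonneg ?_
  simp only [List.mem_map]
  rintro _ ⟨n, -, rfl⟩
  exact hc n

theorem pow_sum_le_sum_composition {R : Type*} [CommSemiring R] [PartialOrder R]
    [IsOrderedRing R] {c : ℕ → R} (hc : ∀ n, 0 ≤ c n) {x : R} (hx : 0 ≤ x) (N k : ℕ) :
    (∑ n ∈ Icc 1 N, c n * x ^ n) ^ k ≤
      ∑ M ∈ Icc k (k * N), (∑ σ : Composition M, (σ.blocks.map c).prod) * x ^ M := by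
  classical
  set P := Fintype.piFinset fun _ : Fin k => Icc 1 N
  have hexpand : (∑ n ∈ Icc 1 N, c n * x ^ n) ^ k = ∑ p ∈ P, ∏ i, c (p i) * x ^ p i := by
    rw [← Fin.prod_const, prod_univ_sum]
  have hmaps : ∀ p ∈ P, ∑ i, p i ∈ Icc k (k * N) := by
    intro p hp
    have hp' : ∀ i, p i ∈ Icc 1 N := Fintype.mem_piFinset.1 hp
    simp only [mem_Icc] at hp' ⊢
    constructor
    · simpa using card_nsmul_le_sum univ p 1 fun i _ => (hp' i).1
    · simpa [mul_comm] using sum_le_card_nsmul univ p N fun i _ => (hp' i).2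
  rw [hexpand, ← sum_fiberwise_of_maps_to hmaps]
  refine sum_le_sum fun M _ => ?_
  have hterm : ∀ p ∈ P.filter (fun p => ∑ i, p i = M),
      ∏ i, c (p i) * x ^ p i = ((List.ofFn p).map c).prod * x ^ M := by
    intro p hp
    rw [prod_mul_distrib, prod_pow_eq_pow_sum, (mem_filter.1 hp).2, List.map_ofFn,
      List.prod_ofFn]
    rfl
  rw [sum_congr rfl hterm, ← sum_mul]
  refine mul_le_mul_of_nonneg_right (sum_prod_ofFn_le_sum_composition hc _ ?_) (pow_nonneg hx M)
  intro p hp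
  obtain ⟨hpP, hpM⟩ := mem_filter.1 hp
  exact ⟨fun i => (mem_Icc.1 (Fintype.mem_piFinset.1 hpP i)).1, hpM⟩

theorem eventually_le_pow_of_tendsto_rpow_inv {a : ℕ → ℝ} {h r : ℝ}
    (hlim : Tendsto (fun n : ℕ => a n ^ (1 / (n : ℝ))) atTop (𝓝 h)) (hr₀ : 0 ≤ r) (hr : h < r) :
    ∀ᶠ n in atTop, a n ≤ r ^ n := by
  filter_upwards [hlim.eventually_lt_const hr, eventually_ge_atTop 1] with n hn hn1
  rcases lt_or_ge (a n) 0 with ha | ha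
  · exact ha.le.trans (pow_nonneg hr₀ n)
  calc a n = (a n ^ (1 / (n : ℝ))) ^ n := by
        rw [← Real.rpow_natCast, ← Real.rpow_mul ha, one_div_mul_cancel (by positivity),
          Real.rpow_one]
    _ ≤ r ^ n := pow_le_pow_left₀ (Real.rpow_nonneg ha _) hn.le n

theorem le_of_pow_le_mul_pow {S r : ℝ} (hr : 0 < r) (N : ℕ)
    (h : ∀ᶠ k : ℕ in atTop, S ^ k ≤ (N * k + 1) * r ^ k) : S ≤ r := by
  by_contra! hrS
  set q := S / r
  have hq : 1 < q := (one_lt_div hr).2 hrS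
  have hsmall : Tendsto (fun k : ℕ => (N * k + 1) / q ^ k) atTop (𝓝 0) := by
    have hpoly := (tendsto_pow_const_div_const_pow_of_one_lt 1 hq).const_mul (N : ℝ)
    have hgeom := tendsto_pow_atTop_nhds_zero_of_lt_one (inv_nonneg.2 (zero_le_one.trans hq.le))
      (inv_lt_one_of_one_lt₀ hq)
    simpa [add_mul, mul_assoc, inv_pow, div_eq_mul_inv] using hpoly.add hgeom
  obtain ⟨k, hk, hk'⟩ := (h.and (hsmall.eventually_lt_const one_pos)).exists
  have hqk : 0 < q ^ k := pow_pos (zero_lt_one.trans hq) k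
  have hSk : S ^ k = q ^ k * r ^ k := by rw [← mul_pow, div_mul_cancel₀ S hr.ne']
  rw [div_lt_one hqk] at hk'
  nlinarith [pow_pos hr k]

theorem le_one_of_pow_le_sum_Icc {a : ℕ → ℝ} {S : ℝ} (N : ℕ)
    (ha : ∀ u > 1, ∀ᶠ M in atTop, a M ≤ u ^ M)
    (hS : ∀ᶠ k in atTop, S ^ k ≤ ∑ M ∈ Icc k (k * N), a M) : S ≤ 1 := by
  have hle : ∀ u > (1 : ℝ), S ≤ u ^ N := by
    intro u hu
    refine le_of_pow_le_mul_pow (pow_pos (zero_lt_one.trans hu) N) N ?_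
    obtain ⟨K, hK⟩ := eventually_atTop.1 (ha u hu)
    filter_upwards [hS, eventually_ge_atTop K] with k hk hkK
    calc S ^ k ≤ ∑ M ∈ Icc k (k * N), a M := hk
      _ ≤ ∑ _M ∈ Icc k (k * N), u ^ (k * N) := sum_le_sum fun M hM =>
          (hK M (hkK.trans (mem_Icc.1 hM).1)).trans (pow_le_pow_right₀ hu.le (mem_Icc.1 hM).2)
      _ ≤ (N * k + 1) * (u ^ N) ^ k := by
          rw [sum_const, Nat.card_Icc, nsmul_eq_mul, ← pow_mul, mul_comm N k]
          gcongr
          exact_mod_cast (Nat.sub_le _ _).trans_eq (by ring)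
  have hcont : Tendsto (fun u : ℝ => u ^ N) (𝓝[>] 1) (𝓝 1) := by
    simpa using ((continuous_pow N).tendsto (1 : ℝ)).mono_left nhdsWithin_le_nhds
  exact ge_of_tendsto hcont (eventually_nhdsWithin_of_forall hle)

theorem stmt13_general (b c : ℕ → ℝ) (hc : ∀ n, 0 ≤ c n)
    (hb : ∀ n, 1 ≤ n → b n = ∑ comp : Composition n, ((comp.blocks.map c).prod))
    (h : ℝ) (hh : 0 < h)
    (hlim : Tendsto (fun n : ℕ => (b n) ^ (1 / (n : ℝ))) atTop (nhds h)) :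
    ∀ N : ℕ, ∑ n ∈ Finset.Icc 1 N, c n * h⁻¹ ^ n ≤ 1 := by
  intro N
  refine le_one_of_pow_le_sum_Icc (a := fun M => b M * h⁻¹ ^ M) N (fun u hu => ?_) ?_
  · have hhu : h < h * u := lt_mul_of_one_lt_right hh hu
    filter_upwards [eventually_le_pow_of_tendsto_rpow_inv hlim (hh.trans hhu).le hhu] with M hM
    calc b M * h⁻¹ ^ M ≤ (h * u) ^ M * h⁻¹ ^ M := by gcongr
      _ = u ^ M := by rw [← mul_pow, mul_right_comm, mul_inv_cancel₀ hh.ne', one_mul]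
  · filter_upwards [eventually_ge_atTop 1] with k hk
    refine (pow_sum_le_sum_composition hc (inv_nonneg.2 hh.le) N k).trans_eq
      (sum_congr rfl fun M hM => ?_)
    rw [hb M (hk.trans (mem_Icc.1 hM).1)]

/-- If `c n ≥ 0`, `c 1 ≥ 1`, `b n` is the sum over compositions of `n` of products of
the `c`-values, and `h = lim (b n)^(1/n)` exists in `(0, ∞)`, then every partial sum
`∑_{n=1}^N c n · h^{-n}` is at most 1. -/
theorem stmt13 (b c : ℕ → ℝ) (hc : ∀ n, 0 ≤ c n) (hc1 : 1 ≤ c 1)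
    (hb : ∀ n, 1 ≤ n → b n = ∑ comp : Composition n, ((comp.blocks.map c).prod))
    (h : ℝ) (hh : 0 < h)
    (hlim : Tendsto (fun n : ℕ => (b n) ^ (1 / (n : ℝ))) atTop (nhds h)) :
    ∀ N : ℕ, ∑ n ∈ Finset.Icc 1 N, c n * h⁻¹ ^ n ≤ 1 :=
  stmt13_general b c hc hb h hh hlim
end

section
/- Let c_5 = 318434429, c_6 = 18335373238, and suppose c_{n+2} ≥ 1248·c_n for all n ≥ 5. If h > 0 satisfies Σ_{n≥1} c_n h^{−n} ≤ 1 where c_1 = 46, c_2 = 0, c_3 = 74130, c_4 = 867346, and 1/h² < 1/1248, then P_6(1/h) + (c_5 h^{−7} + c_6 h^{−8})/(1/1248 − h^{−2}) ≤ 1, and consequently h > 78.32. -/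
/-!
Since `c (n + 2) ≥ 1248 c n` from `n = 5` on, the odd and even tails satisfy
`c (5 + 2k) ≥ 1248ᵏ c 5` and `c (6 + 2k) ≥ 1248ᵏ c 6`, so the partial sums of `∑ cₙ xⁿ` (with
`x = 1/h`) dominate `P₆(x)` plus the partial sums of the geometric series
`(c₅ x⁵ + c₆ x⁶) ∑_{k ≥ 1} (1248 x²)ᵏ`. Letting the number of terms grow gives the first claim.
The left-hand side is increasing in `x` on `[0, 1248^{-1/2})` and already exceeds `1` at
`x = 1/78.32 = 25/1958`, whence `h > 78.32`.
-/
open Finset Filter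

section GeometricGrowth

variable {c : ℕ → ℝ} {ρ : ℝ} {m : ℕ}

lemma pow_mul_le_of_le_add_two (hρ : 0 ≤ ρ) (hgrow : ∀ n, m ≤ n → ρ * c n ≤ c (n + 2))
    {n : ℕ} (hn : m ≤ n) (k : ℕ) : ρ ^ k * c n ≤ c (n + 2 * k) := by
  induction k with
  | zero => simp
  | succ k ih =>
    calc ρ ^ (k + 1) * c n = ρ * (ρ ^ k * c n) := by ring
      _ ≤ ρ * c (n + 2 * k) := mul_le_mul_of_nonneg_left ih hρ
      _ ≤ c (n + 2 * (k + 1)) := hgrow _ (by omega)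

lemma mul_pow_mul_geom_le (hρ : 0 ≤ ρ) (hgrow : ∀ n, m ≤ n → ρ * c n ≤ c (n + 2))
    {n : ℕ} (hn : m ≤ n) {x : ℝ} (hx : 0 ≤ x) (k : ℕ) :
    c n * x ^ n * (ρ * x ^ 2) ^ k ≤ c (n + 2 * k) * x ^ (n + 2 * k) := by
  calc c n * x ^ n * (ρ * x ^ 2) ^ k = ρ ^ k * c n * x ^ (n + 2 * k) := by
        rw [mul_pow, pow_add, pow_mul]; ring
    _ ≤ c (n + 2 * k) * x ^ (n + 2 * k) :=
        mul_le_mul_of_nonneg_right (pow_mul_le_of_le_add_two hρ hgrow hn k) (by positivity)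

lemma sum_Icc_add_mul_geom_le (hρ : 0 ≤ ρ) (hgrow : ∀ n, m ≤ n → ρ * c n ≤ c (n + 2))
    {x : ℝ} (hx : 0 ≤ x) (K : ℕ) :
    ∑ n ∈ Icc 1 (m + 1), c n * x ^ n
        + (c m * x ^ m + c (m + 1) * x ^ (m + 1)) * ∑ k ∈ range K, (ρ * x ^ 2) ^ (k + 1)
      ≤ ∑ n ∈ Icc 1 (m + 1 + 2 * K), c n * x ^ n := by
  induction K with
  | zero => simp
  | succ K ih =>
    have hsplit : ∑ n ∈ Icc 1 (m + 1 + 2 * (K + 1)), c n * x ^ n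
        = ∑ n ∈ Icc 1 (m + 1 + 2 * K), c n * x ^ n + c (m + 2 * (K + 1)) * x ^ (m + 2 * (K + 1))
          + c (m + 1 + 2 * (K + 1)) * x ^ (m + 1 + 2 * (K + 1)) := by
      rw [show m + 1 + 2 * (K + 1) = m + 1 + 2 * K + 1 + 1 by omega, sum_Icc_succ_top (by omega),
        sum_Icc_succ_top (by omega), show m + 1 + 2 * K + 1 = m + 2 * (K + 1) by omega]
    have hm := mul_pow_mul_geom_le hρ hgrow le_rfl hx (K + 1)
    have hm1 := mul_pow_mul_geom_le hρ hgrow (by omega : m ≤ m + 1) hx (K + 1)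
    rw [hsplit, sum_range_succ, mul_add]
    linarith

theorem sum_Icc_add_mul_div_le (hρ : 0 ≤ ρ) (hgrow : ∀ n, m ≤ n → ρ * c n ≤ c (n + 2))
    {x B : ℝ} (hx : 0 ≤ x) (hr : ρ * x ^ 2 < 1)
    (hsum : ∀ N, ∑ n ∈ Icc 1 N, c n * x ^ n ≤ B) :
    ∑ n ∈ Icc 1 (m + 1), c n * x ^ n
        + (c m * x ^ m + c (m + 1) * x ^ (m + 1)) * (ρ * x ^ 2 * (1 - ρ * x ^ 2)⁻¹) ≤ B := by
  have hgeom : HasSum (fun k ↦ (ρ * x ^ 2) ^ (k + 1)) (ρ * x ^ 2 * (1 - ρ * x ^ 2)⁻¹) := by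
    simpa only [pow_succ'] using (hasSum_geometric_of_lt_one (by positivity) hr).mul_left _
  refine le_of_tendsto' ((hgeom.tendsto_sum_nat.const_mul _).const_add _) fun K ↦ ?_
  exact (sum_Icc_add_mul_geom_le hρ hgrow hx K).trans (hsum _)

end GeometricGrowth

lemma lt_of_majorant_le_one {x : ℝ} (hx2 : x ^ 2 < 1 / 1248)
    (hle : (46 * x + 74130 * x ^ 3 + 867346 * x ^ 4 + 318434429 * x ^ 5 + 18335373238 * x ^ 6)
      + (318434429 * x ^ 7 + 18335373238 * x ^ 8) / (1 / 1248 - x ^ 2) ≤ 1) :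
    x < 25 / 1958 := by
  by_contra! hx0
  have hden : 0 < 1 / 1248 - x ^ 2 := by linarith
  have hdiv : (318434429 * (25 / 1958) ^ 7 + 18335373238 * (25 / 1958) ^ 8)
        / (1 / 1248 - (25 / 1958) ^ 2)
      ≤ (318434429 * x ^ 7 + 18335373238 * x ^ 8) / (1 / 1248 - x ^ 2) :=
    div_le_div₀ (by positivity) (by gcongr) hden (by gcongr)
  have hpoly : 46 * (25 / 1958) + 74130 * (25 / 1958) ^ 3 + 867346 * (25 / 1958) ^ 4
      + 318434429 * (25 / 1958) ^ 5 + 18335373238 * (25 / 1958) ^ 6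
      ≤ 46 * x + 74130 * x ^ 3 + 867346 * x ^ 4 + 318434429 * x ^ 5 + 18335373238 * x ^ 6 := by
    gcongr
  norm_num at hdiv hpoly
  linarith

theorem stmt16_general (c : ℕ → ℝ) (h : ℝ)
    (hc1 : c 1 = 46) (hc2 : c 2 = 0) (hc3 : c 3 = 74130) (hc4 : c 4 = 867346)
    (hc5 : c 5 = 318434429) (hc6 : c 6 = 18335373238)
    (hgrow : ∀ n, 5 ≤ n → 1248 * c n ≤ c (n + 2))
    (hh : 0 < h)
    (hsum : ∀ N : ℕ, ∑ n ∈ Finset.Icc 1 N, c n * (1 / h) ^ n ≤ 1)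
    (hsmall : 1 / h ^ 2 < 1 / 1248) :
    (46 * (1 / h) + 74130 * (1 / h) ^ 3 + 867346 * (1 / h) ^ 4
        + 318434429 * (1 / h) ^ 5 + 18335373238 * (1 / h) ^ 6)
      + (318434429 * (1 / h) ^ 7 + 18335373238 * (1 / h) ^ 8)
          / (1 / 1248 - (1 / h) ^ 2) ≤ 1 ∧
    78.32 < h := by
  set x := 1 / h
  have hx : 0 ≤ x := by positivity
  have hx2 : x ^ 2 < 1 / 1248 := by rwa [div_pow, one_pow]
  have key := sum_Icc_add_mul_div_le (m := 5) (by norm_num) hgrow hx (by linarith) hsum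
  norm_num [sum_Icc_succ_top, hc1, hc2, hc3, hc4, hc5, hc6] at key
  have hmajorant : (46 * x + 74130 * x ^ 3 + 867346 * x ^ 4 + 318434429 * x ^ 5
      + 18335373238 * x ^ 6) + (318434429 * x ^ 7 + 18335373238 * x ^ 8) / (1 / 1248 - x ^ 2)
      ≤ 1 := by
    convert key using 1
    have hden : 1 - 1248 * x ^ 2 ≠ 0 := by linarith
    field_simp
  refine ⟨hmajorant, ?_⟩
  have hxlt := lt_of_majorant_le_one hx2 hmajorant
  rw [div_lt_div_iff₀ hh (by norm_num)] at hxlt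
  norm_num
  linarith

/-- With `c 1 = 46`, `c 2 = 0`, `c 3 = 74130`, `c 4 = 867346`, `c 5 = 318434429`,
`c 6 = 18335373238`, `c (n+2) ≥ 1248 c n` for `n ≥ 5`, if `h > 0` satisfies
`∑_{n≥1} c n h^{-n} ≤ 1` (all partial sums) and `1/h² < 1/1248`, then
`P₆(1/h) + (c₅ h⁻⁷ + c₆ h⁻⁸)/(1/1248 − h⁻²) ≤ 1` and consequently `h > 78.32`. -/
theorem stmt16 (c : ℕ → ℝ) (h : ℝ)
    (hc1 : c 1 = 46) (hc2 : c 2 = 0) (hc3 : c 3 = 74130) (hc4 : c 4 = 867346)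
    (hc5 : c 5 = 318434429) (hc6 : c 6 = 18335373238)
    (hcnn : ∀ n, 0 ≤ c n)
    (hgrow : ∀ n, 5 ≤ n → 1248 * c n ≤ c (n + 2))
    (hh : 0 < h)
    (hsum : ∀ N : ℕ, ∑ n ∈ Finset.Icc 1 N, c n * (1 / h) ^ n ≤ 1)
    (hsmall : 1 / h ^ 2 < 1 / 1248) :
    (46 * (1 / h) + 74130 * (1 / h) ^ 3 + 867346 * (1 / h) ^ 4
        + 318434429 * (1 / h) ^ 5 + 18335373238 * (1 / h) ^ 6)
      + (318434429 * (1 / h) ^ 7 + 18335373238 * (1 / h) ^ 8)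
          / (1 / 1248 - (1 / h) ^ 2) ≤ 1 ∧
    78.32 < h :=
  stmt16_general c h hc1 hc2 hc3 hc4 hc5 hc6 hgrow hh hsum hsmall
end
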